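/- Suppose a : Fin T → ℝ and all values a(t) are either 0 or at least ι for some ι ∈ (0,1], and X : Fin T → [0,1], b ∈ ℝ. Then Σ_{t : a(t) > 0} max(0, X(t) − (b − Σ_{r<t} a(r)X(r))⁺ / a(t)) ≤ ι⁻¹ · (Σ_t a(t)X(t) − b)⁺. -/

import Mathlib

/-!
With `f x = max (x - b) 0` and `S t = ∑ r < t, a r * X r`, the summand at `t` equals
`(f (S t + a t * X t) - f (S t)) / a t ≤ ι⁻¹ * (f (S (t + 1)) - f (S t))`.
These increments are nonnegative, so the sum may be extended to all `t`, where it telescopes to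
`ι⁻¹ * (f (S T) - f 0) ≤ ι⁻¹ * f (S T)`.
-/

open Finset

theorem max_zero_sub_max_sub_zero_eq {α : Type*} [AddCommGroup α] [LinearOrder α]
    [IsOrderedAddMonoid α] {b s c : α} (hc : 0 ≤ c) :
    max 0 (c - max (b - s) 0) = max (s + c - b) 0 - max (s - b) 0 := by
  grind

theorem max_zero_sub_max_sub_zero_div_le {α : Type*} [Field α] [LinearOrder α]
    [IsStrictOrderedRing α] {ι a x b s : α} (hι : 0 < ι) (hιa : ι ≤ a) (hx : 0 ≤ x) :
    max 0 (x - max (b - s) 0 / a) ≤ ι⁻¹ * (max (s + a * x - b) 0 - max (s - b) 0) := by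
  have ha : 0 < a := hι.trans_le hιa
  calc max 0 (x - max (b - s) 0 / a)
      = max 0 (a * x - max (b - s) 0) / a := by
        rw [← max_div_div_right ha.le 0, zero_div, sub_div, mul_div_cancel_left₀ _ ha.ne']
    _ = (max (s + a * x - b) 0 - max (s - b) 0) / a := by
        rw [max_zero_sub_max_sub_zero_eq (mul_nonneg ha.le hx)]
    _ ≤ (max (s + a * x - b) 0 - max (s - b) 0) / ι := by
        rw [← max_zero_sub_max_sub_zero_eq (mul_nonneg ha.le hx)]
        exact div_le_div_of_nonneg_left (le_max_left _ _) hι hιa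
    _ = ι⁻¹ * (max (s + a * x - b) 0 - max (s - b) 0) := div_eq_inv_mul _ _

theorem Fin.sum_apply_sum_Iio_add_sub {M G : Type*} [AddCommMonoid M] [AddCommGroup G] {n : ℕ}
    (w : Fin n → M) (F : M → G) :
    ∑ t, (F (∑ r ∈ Iio t, w r + w t) - F (∑ r ∈ Iio t, w r)) = F (∑ t, w t) - F 0 := by
  induction n with
  | zero => simp
  | succ n ih =>
    have hlast : ∑ r ∈ Iio (Fin.last n), w r = ∑ r : Fin n, w r.castSucc := by
      simp [Fin.Iio_last_eq_map]
    rw [Fin.sum_univ_castSucc, Fin.sum_univ_castSucc w, hlast]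
    simp only [Fin.sum_Iio_castSucc]
    rw [ih]
    abel

theorem stmt_7 (T : ℕ) (ι : ℝ) (hι : ι ∈ Set.Ioc (0:ℝ) 1)
    (a : Fin T → ℝ) (ha : ∀ t, a t = 0 ∨ ι ≤ a t)
    (X : Fin T → ℝ) (hX : ∀ t, X t ∈ Set.Icc (0:ℝ) 1) (b : ℝ) :
    ∑ t ∈ Finset.univ.filter (fun t => 0 < a t),
        max 0 (X t - max (b - ∑ r ∈ Finset.Iio t, a r * X r) 0 / a t)
      ≤ ι⁻¹ * max (∑ t, a t * X t - b) 0 := by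
  have hι0 : 0 < ι := hι.1
  have hw : ∀ t, 0 ≤ a t * X t := fun t =>
    mul_nonneg ((ha t).elim (·.ge) hι0.le.trans) (hX t).1
  set S : Fin T → ℝ := fun t => ∑ r ∈ Iio t, a r * X r
  calc ∑ t ∈ univ.filter (fun t => 0 < a t), max 0 (X t - max (b - S t) 0 / a t)
      ≤ ∑ t ∈ univ.filter (fun t => 0 < a t),
          ι⁻¹ * (max (S t + a t * X t - b) 0 - max (S t - b) 0) :=
        sum_le_sum fun t ht => max_zero_sub_max_sub_zero_div_le hι0
          ((ha t).resolve_left (mem_filter.1 ht).2.ne') (hX t).1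
    _ ≤ ∑ t, ι⁻¹ * (max (S t + a t * X t - b) 0 - max (S t - b) 0) :=
        sum_le_sum_of_subset_of_nonneg (filter_subset _ _) fun t _ _ =>
          mul_nonneg (inv_nonneg.2 hι0.le)
            (sub_nonneg.2 (by gcongr; exact le_add_of_nonneg_right (hw t)))
    _ = ι⁻¹ * (max (∑ t, a t * X t - b) 0 - max (0 - b) 0) := by
        rw [← mul_sum,
          Fin.sum_apply_sum_Iio_add_sub (fun t => a t * X t) (fun x => max (x - b) 0)]
    _ ≤ ι⁻¹ * max (∑ t, a t * X t - b) 0 := by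
        gcongr
        exact sub_le_self _ (le_max_right _ _)
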